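/- Let σ(t) = 1/(1 + e^{-t}), let X be an n×m real matrix with rows x_i and entries x_{ij}, let y_1, ..., y_n ∈ [0,1], and let ε > 0. Let B̄ be the m×m diagonal matrix with B̄_kk = ε + 0.155 Σ_{j=1}^m Σ_{i=1}^n |x_{ij} x_{ik}|. Then for every β ∈ ℝ^m the Hessian Σ_{i=1}^n Δ_i x_i x_iᵀ of L_2(β) = Σ_i (σ(⟨β, x_i⟩) - y_i)², where σ_i = σ(⟨β, x_i⟩) and Δ_i = (4σ_i - 6σ_i² - 2y_i + 4y_iσ_i)σ_i(1-σ_i), satisfies Σ_i Δ_i x_i x_iᵀ ⪯ B̄ in the Loewner order, and B̄ is positive definite. -/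

import Mathlib

open Matrix

noncomputable def sigmoid (t : ℝ) : ℝ := 1 / (1 + Real.exp (-t))

open scoped MatrixOrder

/-!
The weight `Δ = (4σ - 6σ² - 2y + 4yσ)σ(1 - σ)` is affine in `y`, equal to `f σ` at `y = 0` and to
`f (1 - σ)` at `y = 1`, where `f s = 2s²(2 - 3s)(1 - s)` is at most `0.155` on `[0, 1]`; so every
weight is at most `0.155`. On the matrix side, `2 a u v ≤ |a| (u² + v²)` shows that a symmetric
matrix is dominated in the Loewner order by the diagonal matrix of its absolute column sums, which
bounds `∑ᵢ xᵢ xᵢᵀ` by `diag (∑ⱼ ∑ᵢ |x_ij x_ik|)`. The summand `ε` makes `B̄` positive definite.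
-/

lemma sigmoid_mem_Icc (t : ℝ) : sigmoid t ∈ Set.Icc (0 : ℝ) 1 := by
  have hpos : 0 < 1 + Real.exp (-t) := by positivity
  refine ⟨by unfold sigmoid; positivity, ?_⟩
  rw [sigmoid, div_le_one hpos]
  linarith [Real.exp_pos (-t)]

-- The maximum of the left-hand side on `[0, 1]` is `≈ 0.1541`, attained at `s = (15 - √33) / 24`.
lemma two_mul_sq_mul_mul_le {s : ℝ} (h0 : 0 ≤ s) (h1 : s ≤ 1) :
    2 * s ^ 2 * (2 - 3 * s) * (1 - s) ≤ 0.155 := by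
  nlinarith [sq_nonneg (12 * s ^ 2 - 15 * s + 4), sq_nonneg (s * (12 * s ^ 2 - 15 * s + 4)),
    sq_nonneg s, sq_nonneg (1 - s), mul_nonneg h0 (sub_nonneg.2 h1)]

lemma lffr_weight_le {s y : ℝ} (hs : s ∈ Set.Icc (0 : ℝ) 1) (hy : y ∈ Set.Icc (0 : ℝ) 1) :
    (4 * s - 6 * s ^ 2 - 2 * y + 4 * y * s) * s * (1 - s) ≤ 0.155 := by
  obtain ⟨hs0, hs1⟩ := hs
  obtain ⟨hy0, hy1⟩ := hy
  have h_affine : (4 * s - 6 * s ^ 2 - 2 * y + 4 * y * s) * s * (1 - s) =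
      (1 - y) * (2 * s ^ 2 * (2 - 3 * s) * (1 - s)) +
        y * (2 * (1 - s) ^ 2 * (2 - 3 * (1 - s)) * (1 - (1 - s))) := by
    ring
  have h_zero := two_mul_sq_mul_mul_le hs0 hs1
  have h_one := two_mul_sq_mul_mul_le (s := 1 - s) (by linarith) (by linarith)
  rw [h_affine]
  nlinarith

lemma two_mul_mul_mul_le_abs_mul (a u v : ℝ) : 2 * (u * a * v) ≤ |a| * (u ^ 2 + v ^ 2) := by
  rcases abs_cases a with ⟨ha, -⟩ | ⟨ha, -⟩ <;> rw [ha] <;>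
    nlinarith [mul_nonneg (abs_nonneg a) (sq_nonneg (u - v)),
      mul_nonneg (abs_nonneg a) (sq_nonneg (u + v))]

namespace Matrix

theorem diagonal_le_diagonal {n : Type*} [DecidableEq n] {d e : n → ℝ} (h : ∀ k, d k ≤ e k) :
    diagonal d ≤ diagonal e := by
  rw [le_iff, diagonal_sub, posSemidef_diagonal_iff]
  exact fun k => sub_nonneg.2 (h k)

variable {ι n : Type*} [Fintype ι] [Fintype n]

theorem sum_smul_vecMulVec_self_le (X : ι → n → ℝ) {w : ι → ℝ} {c : ℝ} (hw : ∀ i, w i ≤ c) :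
    ∑ i, w i • vecMulVec (X i) (X i) ≤ c • ∑ i, vecMulVec (X i) (X i) := by
  rw [Finset.smul_sum]
  refine Finset.sum_le_sum fun i _ => le_iff.2 ?_
  rw [← sub_smul]
  exact .smul (by simpa using posSemidef_vecMulVec_self_star (X i)) (sub_nonneg.2 (hw i))

variable [DecidableEq n]

theorem IsHermitian.le_diagonal_sum_abs {A : Matrix n n ℝ} (hA : A.IsHermitian) :
    A ≤ diagonal fun k => ∑ j, |A j k| := by
  refine le_iff.2 <| .of_dotProduct_mulVec_nonneg ((isHermitian_diagonal _).sub hA) fun v => ?_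
  have hsymm : ∀ j k, A k j = A j k := fun j k => by
    simpa using congrFun (congrFun hA j) k
  have h_swap : ∑ j, ∑ k, |A j k| * v k ^ 2 = ∑ j, ∑ k, |A j k| * v j ^ 2 := by
    rw [Finset.sum_comm]
    simp only [hsymm]
  have h_quad : star v ⬝ᵥ (A *ᵥ v) = ∑ j, ∑ k, v j * A j k * v k := by
    simp only [star_trivial, dotProduct, mulVec, Finset.mul_sum, mul_assoc]
  have h_diag : star v ⬝ᵥ (diagonal (fun k => ∑ j, |A j k|) *ᵥ v) =
      ∑ j, ∑ k, |A j k| * v k ^ 2 := by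
    simp only [star_trivial, mulVec_diagonal, dotProduct, Finset.sum_mul, Finset.mul_sum]
    rw [Finset.sum_comm]
    exact Finset.sum_congr rfl fun k _ => Finset.sum_congr rfl fun j _ => by ring
  rw [sub_mulVec, dotProduct_sub, sub_nonneg, h_quad, h_diag]
  have h_term : ∀ j k, 2 * (v j * A j k * v k) ≤ |A j k| * v j ^ 2 + |A j k| * v k ^ 2 :=
    fun j k => by linarith [two_mul_mul_mul_le_abs_mul (A j k) (v j) (v k)]
  have h_sum := Finset.sum_le_sum fun j (_ : j ∈ Finset.univ) =>
    Finset.sum_le_sum fun k (_ : k ∈ Finset.univ) => h_term j k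
  simp only [← Finset.mul_sum, Finset.sum_add_distrib, h_swap] at h_sum
  linarith

theorem sum_vecMulVec_self_le_diagonal (X : ι → n → ℝ) :
    ∑ i, vecMulVec (X i) (X i) ≤ diagonal fun k => ∑ j, ∑ i, |X i j * X i k| := by
  have hpsd : (∑ i, vecMulVec (X i) (X i)).PosSemidef :=
    posSemidef_sum _ fun i _ => by simpa using posSemidef_vecMulVec_self_star (X i)
  refine hpsd.isHermitian.le_diagonal_sum_abs.trans <| diagonal_le_diagonal fun k => ?_
  simp only [sum_apply, vecMulVec_apply]
  exact Finset.sum_le_sum fun j _ => Finset.abs_sum_le_sum_abs _ _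

end Matrix

/-- For labels `yᵢ ∈ [0,1]` and `ε > 0`, the diagonal matrix `B̄` with entries
`B̄_kk = ε + 0.155 ∑ⱼ ∑ᵢ |x_ij x_ik|` dominates, in the Loewner order, the Hessian
`∑ᵢ Δᵢ xᵢ xᵢᵀ` of `L₂(β) = ∑ᵢ (σ(⟨β, xᵢ⟩) - yᵢ)²` at every `β` (where `σᵢ = σ(⟨β, xᵢ⟩)`
and `Δᵢ = (4σᵢ - 6σᵢ² - 2yᵢ + 4yᵢσᵢ)σᵢ(1-σᵢ)`), and `B̄` is positive definite. -/
theorem lffr_sfh_bound (n m : ℕ) (X : Matrix (Fin n) (Fin m) ℝ) (y : Fin n → ℝ)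
    (hy : ∀ i, y i ∈ Set.Icc (0 : ℝ) 1) (ε : ℝ) (hε : 0 < ε) (β : Fin m → ℝ) :
    let σ : Fin n → ℝ := fun i => sigmoid (β ⬝ᵥ X i)
    let Δ : Fin n → ℝ := fun i =>
      (4 * σ i - 6 * σ i ^ 2 - 2 * y i + 4 * y i * σ i) * σ i * (1 - σ i)
    let Bbar : Matrix (Fin m) (Fin m) ℝ :=
      Matrix.diagonal (fun k => ε + 0.155 * ∑ j, ∑ i, |X i j * X i k|)
    (Bbar - ∑ i, Δ i • Matrix.vecMulVec (X i) (X i)).PosSemidef ∧ Bbar.PosDef := by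
  intro σ Δ Bbar
  have hΔ : ∀ i, Δ i ≤ 0.155 := fun i => lffr_weight_le (sigmoid_mem_Icc _) (hy i)
  refine ⟨le_iff.1 ?_, .diagonal fun k => by positivity⟩
  calc ∑ i, Δ i • vecMulVec (X i) (X i)
      ≤ (0.155 : ℝ) • ∑ i, vecMulVec (X i) (X i) := sum_smul_vecMulVec_self_le X hΔ
    _ ≤ (0.155 : ℝ) • diagonal fun k => ∑ j, ∑ i, |X i j * X i k| :=
        smul_le_smul_of_nonneg_left (sum_vecMulVec_self_le_diagonal X) (by norm_num)
    _ ≤ Bbar := by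
        rw [← diagonal_smul]
        exact diagonal_le_diagonal fun k => by simp only [Pi.smul_apply, smul_eq_mul]; linarith
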